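/- arXiv:1506.06597 — 2 statements merged into one kernel-verified Lean document; each statement's English description precedes it below -/
import Mathlib

section
/- The operators T_i = t - ((t*x_i - x_{i+1})/(x_i - x_{i+1}))*(1 - s_i) satisfy the braid relation T_i T_{i+1} T_i = T_{i+1} T_i T_{i+1} for all 1 ≤ i ≤ n-2, as operators on polynomials in (x_1,...,x_n). -/
open MvPolynomial

noncomputable section

/-- The field of rational functions in the variables `x_i`, `i ∈ ℕ`. -/
abbrev RF (K : Type*) [Field K] := FractionRing (MvPolynomial ℕ K)

variable {K : Type*} [Field K]

/-- The rational function `x_i`. -/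
def xv (i : ℕ) : RF K := algebraMap (MvPolynomial ℕ K) (RF K) (X i)

/-- The operator `s_i` exchanging the variables `x_i` and `x_{i+1}`. -/
def sOp (i : ℕ) : RF K ≃+* RF K :=
  IsFractionRing.ringEquivOfRingEquiv
    ((renameEquiv K (Equiv.swap i (i + 1))).toRingEquiv)

set_option maxHeartbeats 4000000
set_option synthInstance.maxHeartbeats 400000
set_option maxRecDepth 100000

lemma sOp_xv (i j : ℕ) : sOp (K := K) i (xv j) = xv (Equiv.swap i (i+1) j) := by
  simp [sOp, xv, IsFractionRing.ringEquivOfRingEquiv_algebraMap]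

lemma sOp_algebraMap (i : ℕ) (t : K) :
    sOp i (algebraMap K (RF K) t) = algebraMap K (RF K) t := by
  rw [IsScalarTower.algebraMap_apply K (MvPolynomial ℕ K) (RF K)]
  simp [sOp, IsFractionRing.ringEquivOfRingEquiv_algebraMap, algebraMap_eq]

lemma sOp_braid (i : ℕ) (f : RF K) :
    sOp i (sOp (i+1) (sOp i f)) = sOp (i+1) (sOp i (sOp (i+1) f)) := by
  have h : ((sOp (K := K) i : RF K →+* RF K).comp
      (((sOp (K := K) (i+1) : RF K →+* RF K)).comp (sOp (K := K) i : RF K →+* RF K))) =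
      ((sOp (K := K) (i+1) : RF K →+* RF K).comp
      (((sOp (K := K) i : RF K →+* RF K)).comp (sOp (K := K) (i+1) : RF K →+* RF K))) := by
    apply IsLocalization.ringHom_ext (nonZeroDivisors (MvPolynomial ℕ K))
    ext p
    · simp [RingHom.comp_apply, sOp, IsFractionRing.ringEquivOfRingEquiv_algebraMap,
        renameEquiv_apply, rename_C]
    · simp only [RingHom.comp_apply, sOp, RingHom.coe_coe,
        IsFractionRing.ringEquivOfRingEquiv_algebraMap, AlgEquiv.toRingEquiv_eq_coe,
        AlgEquiv.coe_ringEquiv, renameEquiv_apply, rename_X]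
      congr 2
      simp only [Equiv.swap_apply_def]
      split_ifs <;> omega
  exact DFunLike.congr_fun h f

lemma sOp_sOp (j : ℕ) (g : RF K) : sOp j (sOp j g) = g := by
  have h : ((sOp (K := K) j : RF K →+* RF K).comp (sOp (K := K) j : RF K →+* RF K))
      = RingHom.id _ := by
    apply IsLocalization.ringHom_ext (nonZeroDivisors (MvPolynomial ℕ K))
    ext p
    · simp [sOp, IsFractionRing.ringEquivOfRingEquiv_algebraMap, rename_C]
    · simp [sOp, IsFractionRing.ringEquivOfRingEquiv_algebraMap, rename_X]
  exact DFunLike.congr_fun h g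

lemma xv_sub_ne (i j : ℕ) (h : i ≠ j) : (xv i : RF K) - xv j ≠ 0 := by
  rw [xv, xv, ← map_sub]
  intro hc
  have h0 : (X i - X j : MvPolynomial ℕ K) = 0 :=
    IsFractionRing.injective (MvPolynomial ℕ K) (RF K) (by simpa using hc)
  exact h (X_injective (sub_eq_zero.mp h0))


lemma stepA {F : Type*} [Field F] {t p q x y n : F} (hq : q ≠ 0)
    (h : n = t*x*q - p*(x-y)) : t * x - p / q * (x - y) = n / q := by
  subst h; field_simp; try ring

lemma stepA' {F : Type*} [Field F] {t p q x y n : F} (hq : q ≠ 0)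
    (h : n = t*x*q + p*(x-y)) : t * x - -(p / q) * (x - y) = n / q := by
  subst h; field_simp; try ring

lemma stepB {F : Type*} [Field F] {t p q u v d1 d2 D n : F} (hq : q ≠ 0)
    (h1 : d1 ≠ 0) (h2 : d2 ≠ 0) (hD : D = d1 * q * d2)
    (h : n = t*u*q*d2 - p*(u*d2 - v*d1)) :
    t * (u / d1) - p / q * (u / d1 - v / d2) = n / D := by
  subst h hD; field_simp; try ring

lemma stepC {F : Type*} [Field F] {t p q u v d n : F} (hq : q ≠ 0) (hd : d ≠ 0)
    (h : n = t*u*q - p*(u-v)) :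
    t * (u / d) - p / q * (u / d - v / d) = n / (d * q) := by
  subst h; field_simp; try ring

lemma braid_calc {F : Type*} [Field F] (T a b c f g1 g2 g12 g21 w : F)
    (hab : a - b ≠ 0) (hbc : b - c ≠ 0) (hac : a - c ≠ 0) :
    T * (T * (T * f - (T * a - b) / (a - b) * (f - g1)) - (T * b - c) / (b - c) * (T * f - (T * a - b) / (a - b) * (f - g1) - (T * g2 - (T * a - c) / (a - c) * (g2 - g21)))) - (T * a - b) / (a - b) * (T * (T * f - (T * a - b) / (a - b) * (f - g1)) - (T * b - c) / (b - c) * (T * f - (T * a - b) / (a - b) * (f - g1) - (T * g2 - (T * a - c) / (a - c) * (g2 - g21))) - (T * (T * g1 - -((T * b - a) / (a - b)) * (g1 - f)) - (T * a - c) / (a - c) * (T * g1 - -((T * b - a) / (a - b)) * (g1 - f) - (T * g12 - (T * b - c) / (b - c) * (g12 - w))))) = T * (T * (T * f - (T * b - c) / (b - c) * (f - g2)) - (T * a - b) / (a - b) * (T * f - (T * b - c) / (b - c) * (f - g2) - (T * g1 - (T * a - c) / (a - c) * (g1 - g12)))) - (T * b - c) / (b - c) * (T * (T * f - (T * b - c)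 / (b - c) * (f - g2)) - (T * a - b) / (a - b) * (T * f - (T * b - c) / (b - c) * (f - g2) - (T * g1 - (T * a - c) / (a - c) * (g1 - g12))) - (T * (T * g2 - -((T * c - b) / (b - c)) * (g2 - f)) - (T * a - c) / (a - c) * (T * g2 - -((T * c - b) / (b - c)) * (g2 - f) - (T * g21 - (T * a - b) / (a - b) * (g21 - w))))) := by
  have hD3 : ((a - b) * (b - c) * (a - c)) ≠ 0 := mul_ne_zero (mul_ne_zero hab hbc) hac
  have hP1 : T * f - (T * a - b) / (a - b) * (f - g1) = ((-T*b + b) * f + (T*a - b) * g1) / ((a - b)) := stepA hab (by ring)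
  have hP2 : T * g2 - (T * a - c) / (a - c) * (g2 - g21) = ((-T*c + c) * g2 + (T*a - c) * g21) / ((a - c)) := stepA hac (by ring)
  have hP3 : T * g1 - -((T * b - a) / (a - b)) * (g1 - f) = ((-T*b + a) * f + (T*a - a) * g1) / ((a - b)) := stepA' hab (by ring)
  have hP4 : T * g12 - (T * b - c) / (b - c) * (g12 - w) = ((-T*c + c) * g12 + (T*b - c) * w) / ((b - c)) := stepA hbc (by ring)
  have hF1 : T * f - (T * b - c) / (b - c) * (f - g2) = ((-T*c + c) * f + (T*b - c) * g2) / ((b - c)) := stepA hbc (by ring)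
  have hR2 : T * g1 - (T * a - c) / (a - c) * (g1 - g12) = ((-T*c + c) * g1 + (T*a - c) * g12) / ((a - c)) := stepA hac (by ring)
  have hR3 : T * g2 - -((T * c - b) / (b - c)) * (g2 - f) = ((-T*c + b) * f + (T*b - b) * g2) / ((b - c)) := stepA' hbc (by ring)
  have hR4 : T * g21 - (T * a - b) / (a - b) * (g21 - w) = ((-T*b + b) * g21 + (T*a - b) * w) / ((a - b)) := stepA hab (by ring)
  have hQ1 : T * (((-T*b + b) * f + (T*a - b) * g1) / ((a - b))) - (T * b - c) / (b - c) * (((-T*b + b) * f + (T*a - b) * g1) / ((a - b)) - (((-T*c + c) * g2 + (T*a - c) * g21) / ((a - c)))) = ((T^2*a*b*c - T^2*b*c^2 - 2*T*a*b*c + 2*T*b*c^2 + a*b*c - b*c^2) * f + (-T^2*a^2*c + T^2*a*c^2 + T*a^2*c + T*a*b*c - T*a*c^2 - T*b*c^2 - a*b*c + b*c^2) * g1 + (-T^2*a*b*c + T^2*b^2*c + T*a*b*c + T*a*c^2 - T*b^2*c - T*b*c^2 - a*c^2 + b*c^2) * g2 + (T^2*a^2*b - T^2*a*b^2 - T*a^2*c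 + T*b^2*c + a*c^2 - b*c^2) * g21) / ((a - b) * (b - c) * (a - c)) := stepB hbc hab hac (by ring) (by ring)
  have hQ2 : T * (((-T*b + a) * f + (T*a - a) * g1) / ((a - b))) - (T * a - c) / (a - c) * (((-T*b + a) * f + (T*a - a) * g1) / ((a - b)) - (((-T*c + c) * g12 + (T*b - c) * w) / ((b - c)))) = ((T^2*b^2*c - T^2*b*c^2 - T*a*b*c + T*a*c^2 - T*b^2*c + T*b*c^2 + a*b*c - a*c^2) * f + (-T^2*a*b*c + T^2*a*c^2 + 2*T*a*b*c - 2*T*a*c^2 - a*b*c + a*c^2) * g1 + (-T^2*a^2*c + T^2*a*b*c + T*a^2*c - T*a*b*c + T*a*c^2 - T*b*c^2 - a*c^2 + b*c^2) * g12 + (T^2*a^2*b - T^2*a*b^2 - T*a^2*c + T*b^2*c + a*c^2 - b*c^2) * w) / ((a - b) * (b - c) * (a - c)) := stepB hac hab hbc (by ring) (by ring)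
  have hS1 : T * (((-T*c + c) * f + (T*b - c) * g2) / ((b - c))) - (T * a - b) / (a - b) * (((-T*c + c) * f + (T*b - c) * g2) / ((b - c)) - (((-T*c + c) * g1 + (T*a - c) * g12) / ((a - c)))) = ((T^2*a*b*c - T^2*b*c^2 - 2*T*a*b*c + 2*T*b*c^2 + a*b*c - b*c^2) * f + (-T^2*a*b*c + T^2*a*c^2 + T*a*b*c - T*a*c^2 + T*b^2*c - T*b*c^2 - b^2*c + b*c^2) * g1 + (-T^2*a*b^2 + T^2*b^2*c + T*a*b^2 + T*a*b*c - T*b^2*c - T*b*c^2 - a*b*c + b*c^2) * g2 + (T^2*a^2*b - T^2*a^2*c - T*a*b^2 + T*a*c^2 + b^2*c - b*c^2) * g12) / ((a - b) * (b - c) * (a - c)) := stepB hab hbc hac (by ring) (by ring)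
  have hS2 : T * (((-T*c + b) * f + (T*b - b) * g2) / ((b - c))) - (T * a - c) / (a - c) * (((-T*c + b) * f + (T*b - b) * g2) / ((b - c)) - (((-T*b + b) * g21 + (T*a - b) * w) / ((a - b)))) = ((T^2*a*c^2 - T^2*b*c^2 - T*a*b*c - T*a*c^2 + T*b^2*c + T*b*c^2 + a*b*c - b^2*c) * f + (-T^2*a*b*c + T^2*b^2*c + 2*T*a*b*c - 2*T*b^2*c - a*b*c + b^2*c) * g2 + (-T^2*a*b^2 + T^2*a*b*c + T*a*b^2 - T*a*b*c + T*b^2*c - T*b*c^2 - b^2*c + b*c^2) * g21 + (T^2*a^2*b - T^2*a^2*c - T*a*b^2 + T*a*c^2 + b^2*c - b*c^2) * w) / ((a - b) * (b - c) * (a - c)) := stepB hac hbc hab (by ring) (by ring)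
  have hL : T * (((T^2*a*b*c - T^2*b*c^2 - 2*T*a*b*c + 2*T*b*c^2 + a*b*c - b*c^2) * f + (-T^2*a^2*c + T^2*a*c^2 + T*a^2*c + T*a*b*c - T*a*c^2 - T*b*c^2 - a*b*c + b*c^2) * g1 + (-T^2*a*b*c + T^2*b^2*c + T*a*b*c + T*a*c^2 - T*b^2*c - T*b*c^2 - a*c^2 + b*c^2) * g2 + (T^2*a^2*b - T^2*a*b^2 - T*a^2*c + T*b^2*c + a*c^2 - b*c^2) * g21) / ((a - b) * (b - c) * (a - c))) - (T * a - b) / (a - b) * (((T^2*a*b*c - T^2*b*c^2 - 2*T*a*b*c + 2*T*b*c^2 + a*b*c - b*c^2) * f + (-T^2*a^2*c + T^2*a*c^2 + T*a^2*c + T*a*b*c - T*a*c^2 - T*b*c^2 - a*b*c + b*c^2) * g1 + (-T^2*a*b*c + T^2*b^2*c + T*a*b*c + T*a*c^2 - T*b^2*c - T*b*c^2 - a*c^2 + b*c^2) * g2 + (T^2*a^2*b - T^2*a*b^2 - T*a^2*c + T*b^2*c + a*c^2 - b*c^2) * g21) / ((a - b) * (b - c) * (a - c)) - (((T^2*b^2*c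 - T^2*b*c^2 - T*a*b*c + T*a*c^2 - T*b^2*c + T*b*c^2 + a*b*c - a*c^2) * f + (-T^2*a*b*c + T^2*a*c^2 + 2*T*a*b*c - 2*T*a*c^2 - a*b*c + a*c^2) * g1 + (-T^2*a^2*c + T^2*a*b*c + T*a^2*c - T*a*b*c + T*a*c^2 - T*b*c^2 - a*c^2 + b*c^2) * g12 + (T^2*a^2*b - T^2*a*b^2 - T*a^2*c + T*b^2*c + a*c^2 - b*c^2) * w) / ((a - b) * (b - c) * (a - c)))) = ((-T^3*a*b*c^2 + T^3*b^2*c^2 - T^2*a^2*b*c + T^2*a^2*c^2 + 2*T^2*a*b^2*c + T^2*a*b*c^2 - T^2*b^3*c - 2*T^2*b^2*c^2 + T*a^2*b*c - T*a^2*c^2 - 2*T*a*b^2*c - T*a*b*c^2 + T*b^3*c + 2*T*b^2*c^2 + a*b*c^2 - b^2*c^2) * f + (T^3*a^2*c^2 - T^3*a*b*c^2 - 2*T^2*a^2*c^2 + T^2*a*b*c^2 + T^2*b^2*c^2 + T*a^2*c^2 + T*a*b*c^2 - 2*T*b^2*c^2 - a*b*c^2 + b^2*c^2) * g1 + (T^3*a*b^2*c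 - T^3*b^3*c - 2*T^2*a*b^2*c - T^2*a*b*c^2 + 2*T^2*b^3*c + T^2*b^2*c^2 + T*a*b^2*c + 2*T*a*b*c^2 - T*b^3*c - 2*T*b^2*c^2 - a*b*c^2 + b^2*c^2) * g2 + (-T^3*a^3*c + T^3*a^2*b*c + T^2*a^3*c + T^2*a^2*c^2 - T^2*a*b^2*c - T^2*a*b*c^2 - T*a^2*b*c - T*a^2*c^2 + T*a*b^2*c + T*b^2*c^2 + a*b*c^2 - b^2*c^2) * g12 + (-T^3*a^2*b^2 + T^3*a*b^3 + T^2*a^2*b^2 + T^2*a^2*b*c - T^2*a*b^3 - T^2*b^3*c - T*a^2*b*c - T*a*b*c^2 + T*b^3*c + T*b^2*c^2 + a*b*c^2 - b^2*c^2) * g21 + (T^3*a^3*b - T^3*a^2*b^2 - T^2*a^3*c - T^2*a^2*b^2 + T^2*a*b^3 + T^2*a*b^2*c + T*a^2*b*c + T*a^2*c^2 - T*a*b*c^2 - T*b^3*c - a*b*c^2 + b^2*c^2) * w) / (((a - b) * (b - c) * (a - c)) * (a - b)) := stepC hab hD3 (by ring)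
  have hR : T * (((T^2*a*b*c - T^2*b*c^2 - 2*T*a*b*c + 2*T*b*c^2 + a*b*c - b*c^2) * f + (-T^2*a*b*c + T^2*a*c^2 + T*a*b*c - T*a*c^2 + T*b^2*c - T*b*c^2 - b^2*c + b*c^2) * g1 + (-T^2*a*b^2 + T^2*b^2*c + T*a*b^2 + T*a*b*c - T*b^2*c - T*b*c^2 - a*b*c + b*c^2) * g2 + (T^2*a^2*b - T^2*a^2*c - T*a*b^2 + T*a*c^2 + b^2*c - b*c^2) * g12) / ((a - b) * (b - c) * (a - c))) - (T * b - c) / (b - c) * (((T^2*a*b*c - T^2*b*c^2 - 2*T*a*b*c + 2*T*b*c^2 + a*b*c - b*c^2) * f + (-T^2*a*b*c + T^2*a*c^2 + T*a*b*c - T*a*c^2 + T*b^2*c - T*b*c^2 - b^2*c + b*c^2) * g1 + (-T^2*a*b^2 + T^2*b^2*c + T*a*b^2 + T*a*b*c - T*b^2*c - T*b*c^2 - a*b*c + b*c^2) * g2 + (T^2*a^2*b - T^2*a^2*c - T*a*b^2 + T*a*c^2 + b^2*c - b*c^2) * g12) / ((a - b) * (b - c) * (a - c)) - (((T^2*a*c^2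 - T^2*b*c^2 - T*a*b*c - T*a*c^2 + T*b^2*c + T*b*c^2 + a*b*c - b^2*c) * f + (-T^2*a*b*c + T^2*b^2*c + 2*T*a*b*c - 2*T*b^2*c - a*b*c + b^2*c) * g2 + (-T^2*a*b^2 + T^2*a*b*c + T*a*b^2 - T*a*b*c + T*b^2*c - T*b*c^2 - b^2*c + b*c^2) * g21 + (T^2*a^2*b - T^2*a^2*c - T*a*b^2 + T*a*c^2 + b^2*c - b*c^2) * w) / ((a - b) * (b - c) * (a - c)))) = ((-T^3*b^2*c^2 + T^3*b*c^3 - T^2*a*b^2*c + 2*T^2*a*b*c^2 - T^2*a*c^3 + T^2*b^3*c + T^2*b^2*c^2 - 2*T^2*b*c^3 + T*a*b^2*c - 2*T*a*b*c^2 + T*a*c^3 - T*b^3*c - T*b^2*c^2 + 2*T*b*c^3 + b^2*c^2 - b*c^3) * f + (T^3*a*b*c^2 - T^3*a*c^3 - 2*T^2*a*b*c^2 + 2*T^2*a*c^3 - T^2*b^2*c^2 + T^2*b*c^3 + T*a*b*c^2 - T*a*c^3 + 2*T*b^2*c^2 - 2*T*b*c^3 - b^2*c^2 + b*c^3) * g1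 + (T^3*b^3*c - T^3*b^2*c^2 - 2*T^2*b^3*c + T^2*b^2*c^2 + T^2*b*c^3 + T*b^3*c + T*b^2*c^2 - 2*T*b*c^3 - b^2*c^2 + b*c^3) * g2 + (-T^3*a^2*b*c + T^3*a^2*c^2 + T^2*a^2*b*c - T^2*a^2*c^2 + T^2*a*b^2*c - T^2*a*c^3 - T*a*b^2*c + T*a*c^3 - T*b^2*c^2 + T*b*c^3 + b^2*c^2 - b*c^3) * g12 + (-T^3*a*b^3 + T^3*a*b^2*c + T^2*a*b^3 - T^2*a*b*c^2 + T^2*b^3*c - T^2*b^2*c^2 - T*a*b^2*c + T*a*b*c^2 - T*b^3*c + T*b*c^3 + b^2*c^2 - b*c^3) * g21 + (T^3*a^2*b^2 - T^3*a^2*b*c - T^2*a^2*b*c + T^2*a^2*c^2 - T^2*a*b^3 + T^2*a*b*c^2 + T*a*b^2*c - T*a*c^3 + T*b^3*c - T*b^2*c^2 - b^2*c^2 + b*c^3) * w) / (((a - b) * (b - c) * (a - c)) * (b - c)) := stepC hbc hD3 (by ring)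
  rw [hP1, hP2, hP3, hP4, hF1, hR2, hR3, hR4, hQ1, hQ2, hS1, hS2, hL, hR]
  rw [div_eq_div_iff (mul_ne_zero hD3 hab) (mul_ne_zero hD3 hbc)]
  ring

/-- The polynomial Hecke generator
`T_i f = t·f - ((t·x_i - x_{i+1})/(x_i - x_{i+1}))·(f - s_i f)`. -/
def TOp (t : K) (i : ℕ) (f : RF K) : RF K :=
  algebraMap K (RF K) t * f -
    ((algebraMap K (RF K) t * xv i - xv (i + 1)) / (xv i - xv (i + 1))) *
      (f - sOp i f)

/-- The braid relation `T_i T_{i+1} T_i = T_{i+1} T_i T_{i+1}`. -/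
theorem hecke_braid_relation (t : K) (i : ℕ) (f : RF K) :
    TOp t i (TOp t (i + 1) (TOp t i f)) =
      TOp t (i + 1) (TOp t i (TOp t (i + 1) f)) := by
  have e1 : sOp (K := K) i (xv i) = xv (i+1) := by rw [sOp_xv]; simp
  have e2 : sOp (K := K) i (xv (i+1)) = xv i := by rw [sOp_xv]; simp
  have e3 : sOp (K := K) i (xv (i+1+1)) = xv (i+1+1) := by
    rw [sOp_xv, Equiv.swap_apply_of_ne_of_ne (by omega) (by omega)]
  have e4 : sOp (K := K) (i+1) (xv i) = xv i := by
    rw [sOp_xv, Equiv.swap_apply_of_ne_of_ne (by omega) (by omega)]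
  have e5 : sOp (K := K) (i+1) (xv (i+1)) = xv (i+1+1) := by rw [sOp_xv]; simp
  have e6 : sOp (K := K) (i+1) (xv (i+1+1)) = xv (i+1) := by rw [sOp_xv]; simp
  simp only [TOp]
  simp only [map_sub, map_mul, map_div₀, sOp_algebraMap, sOp_sOp, e1, e2, e3, e4, e5, e6]
  rw [sOp_braid]
  have f1 : (xv (K := K) (i+1)) - xv i = -(xv i - xv (i+1)) := by ring
  have f2 : (xv (K := K) (i+1+1)) - xv (i+1) = -(xv (i+1) - xv (i+1+1)) := by ring
  simp only [f1, f2, div_neg]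
  set T := algebraMap K (RF K) t with hTdef
  set a := xv (K := K) i
  set b := xv (K := K) (i+1)
  set c := xv (K := K) (i+1+1)
  set g1 := sOp (K := K) i f
  set g2 := sOp (K := K) (i+1) f
  set g12 := sOp (K := K) i (sOp (i+1) f)
  set g21 := sOp (K := K) (i+1) (sOp i f)
  set w := sOp (K := K) (i+1) (sOp i (sOp (i+1) f))
  have hab : a - b ≠ 0 := xv_sub_ne _ _ (by omega)
  have hbc : b - c ≠ 0 := xv_sub_ne _ _ (by omega)
  have hac : a - c ≠ 0 := xv_sub_ne _ _ (by omega)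
  exact braid_calc T a b c f g1 g2 g12 g21 w hab hbc hac
end
end

section
/- For the Fock representation of the t-boson algebra, and for integers b, c ≥ 0 and a parameter d, with the trace defined as Tr[φ^b (φ†)^c k^d] = Σ_{m≥0} ⟨m|φ^b (φ†)^c k^d|m⟩ (understood so that it converges in |t^d|, or as a formal trace), one has Tr[φ^b (φ†)^c k^d] = δ_{b,c} · (∏_{i=1}^{b}(1 - t^i)) / (∏_{i=0}^{b}(1 - t^{d+i})). -/
noncomputable section

/-- The Fock-space annihilation operator `φ|m⟩ = (1 - t^m)|m-1⟩`
(so `φ|0⟩ = 0`), as an endomorphism of the space with basis `{|m⟩ : m ∈ ℕ}`. -/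
def phiOp (t : ℝ) : Module.End ℝ (ℕ →₀ ℝ) :=
  Finsupp.lsum ℝ fun m => (1 - t ^ m) • Finsupp.lsingle (m - 1)

/-- The Fock-space creation operator `φ†|m⟩ = |m+1⟩`. -/
def phiDagOp : Module.End ℝ (ℕ →₀ ℝ) :=
  Finsupp.lsum ℝ fun m => Finsupp.lsingle (m + 1)

lemma phiDag_pow (c m : ℕ) :
    (phiDagOp ^ c) (Finsupp.single m (1:ℝ)) = Finsupp.single (m + c) 1 := by
  induction c generalizing m with
  | zero => simp
  | succ n ih =>
    have h1 : phiDagOp (Finsupp.single m (1:ℝ)) = Finsupp.single (m+1) 1 := by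
      simp [phiDagOp]
    rw [pow_succ, Module.End.mul_apply, h1, ih (m+1)]
    congr 1; omega

lemma phi_pow (t : ℝ) (b n : ℕ) :
    (phiOp t ^ b) (Finsupp.single n (1:ℝ)) =
      (∏ j ∈ Finset.range b, (1 - t ^ (n - j))) • Finsupp.single (n - b) 1 := by
  induction b generalizing n with
  | zero => simp
  | succ k ih =>
    rw [pow_succ, Module.End.mul_apply]
    have h1 : phiOp t (Finsupp.single n (1:ℝ)) = (1 - t ^ n) • Finsupp.single (n-1) 1 := by
      simp [phiOp, Finsupp.lsum_single]
    rw [h1, map_smul, ih (n-1), smul_smul]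
    have hidx : n - 1 - k = n - (k+1) := by omega
    rw [hidx, Finset.prod_range_succ', Nat.sub_zero, mul_comm]
    congr 2
    exact Finset.prod_congr rfl fun j _ => by rw [show n - 1 - j = n - (j+1) from by omega]

lemma summ_aux (t z : ℝ) (ht0 : 0 < t) (ht1 : t < 1) (hz0 : 0 < z) (hz1 : z < 1) (b : ℕ) :
    Summable (fun m : ℕ => z ^ m * ∏ i ∈ Finset.range b, (1 - t ^ (m + 1 + i))) := by
  have hfac : ∀ k : ℕ, 0 < k → 0 < 1 - t ^ k ∧ 1 - t ^ k ≤ 1 := fun k hk =>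
    ⟨by have := pow_lt_one₀ ht0.le ht1 (by omega : k ≠ 0); linarith,
     by have := pow_pos ht0 k; linarith⟩
  apply Summable.of_nonneg_of_le (fun m => ?_) (fun m => ?_)
      (summable_geometric_of_lt_one hz0.le hz1)
  · exact mul_nonneg (pow_nonneg hz0.le m)
      (Finset.prod_nonneg fun i _ => (hfac _ (by omega)).1.le)
  · calc z ^ m * ∏ i ∈ Finset.range b, (1 - t ^ (m + 1 + i))
        ≤ z ^ m * 1 := by
          apply mul_le_mul_of_nonneg_left _ (pow_nonneg hz0.le m)
          exact Finset.prod_le_one (fun i _ => (hfac _ (by omega)).1.le)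
            (fun i _ => (hfac _ (by omega)).2)
      _ = z ^ m := mul_one _

lemma denom_pos (t z : ℝ) (ht0 : 0 < t) (ht1 : t < 1) (hz0 : 0 < z) (hz1 : z < 1) (n : ℕ) :
    0 < ∏ i ∈ Finset.range n, (1 - z * t ^ i) := by
  apply Finset.prod_pos
  intro i _
  have h1 : t ^ i ≤ 1 := pow_le_one₀ ht0.le ht1.le
  have h2 : z * t ^ i ≤ z * 1 := mul_le_mul_of_nonneg_left h1 hz0.le
  linarith

lemma sum_main (t : ℝ) (ht0 : 0 < t) (ht1 : t < 1) (b : ℕ) :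
    ∀ z : ℝ, 0 < z → z < 1 →
    ∑' m : ℕ, z ^ m * ∏ i ∈ Finset.range b, (1 - t ^ (m + 1 + i)) =
      (∏ i ∈ Finset.Icc 1 b, (1 - t ^ i)) /
        ∏ i ∈ Finset.range (b + 1), (1 - z * t ^ i) := by
  induction b with
  | zero =>
    intro z hz0 hz1
    simp [tsum_geometric_of_lt_one hz0.le hz1]
  | succ k ih =>
    intro z hz0 hz1
    have hzt0 : 0 < z * t := mul_pos hz0 ht0
    have hzt1 : z * t < 1 := by nlinarith
    have hS1 := summ_aux t z ht0 ht1 hz0 hz1 k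
    have hS2 := summ_aux t (z*t) ht0 ht1 hzt0 hzt1 k
    have key : ∀ m : ℕ, z ^ m * ∏ i ∈ Finset.range (k+1), (1 - t ^ (m + 1 + i)) =
        z ^ m * ∏ i ∈ Finset.range k, (1 - t ^ (m + 1 + i)) -
        t ^ (k+1) * ((z*t) ^ m * ∏ i ∈ Finset.range k, (1 - t ^ (m + 1 + i))) := by
      intro m
      rw [Finset.prod_range_succ, mul_pow,
        show t ^ (m + 1 + k) = t ^ m * t ^ (k+1) by rw [← pow_add]; ring_nf]
      ring
    rw [tsum_congr key, Summable.tsum_sub hS1 (hS2.mul_left _), tsum_mul_left,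
      ih z hz0 hz1, ih (z*t) hzt0 hzt1]
    -- algebra
    have hD : (0:ℝ) < ∏ i ∈ Finset.range (k + 1), (1 - z * t ^ i) :=
      denom_pos t z ht0 ht1 hz0 hz1 _
    have hD' : (0:ℝ) < ∏ i ∈ Finset.range (k + 1), (1 - z * t * t ^ i) :=
      denom_pos t (z*t) ht0 ht1 hzt0 hzt1 _
    have hD'' : (0:ℝ) < ∏ i ∈ Finset.range (k + 2), (1 - z * t ^ i) :=
      denom_pos t z ht0 ht1 hz0 hz1 _
    have h1 : ∏ i ∈ Finset.range (k + 2), (1 - z * t ^ i) =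
        (∏ i ∈ Finset.range (k + 1), (1 - z * t ^ i)) * (1 - z * t ^ (k+1)) :=
      Finset.prod_range_succ _ _
    have h2 : ∏ i ∈ Finset.range (k + 2), (1 - z * t ^ i) =
        (∏ i ∈ Finset.range (k + 1), (1 - z * t * t ^ i)) * (1 - z) := by
      rw [Finset.prod_range_succ']
      congr 1
      · exact Finset.prod_congr rfl fun i _ => by rw [pow_succ']; ring_nf
      · simp
    have hA : ∏ i ∈ Finset.Icc 1 (k+1), (1 - t ^ i) =
        (∏ i ∈ Finset.Icc 1 k, (1 - t ^ i)) * (1 - t ^ (k+1)) :=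
      Finset.prod_Icc_succ_top (by omega) _
    rw [hA]
    rw [eq_div_iff (ne_of_gt hD''), sub_mul, h1]
    rw [show (∏ i ∈ Finset.Icc 1 k, (1 - t ^ i)) /
          (∏ i ∈ Finset.range (k + 1), (1 - z * t ^ i)) *
          ((∏ i ∈ Finset.range (k + 1), (1 - z * t ^ i)) * (1 - z * t ^ (k+1))) =
        (∏ i ∈ Finset.Icc 1 k, (1 - t ^ i)) * (1 - z * t ^ (k+1)) by
      field_simp]
    rw [← h1, h2]
    rw [show t ^ (k+1) * ((∏ i ∈ Finset.Icc 1 k, (1 - t ^ i)) /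
          (∏ i ∈ Finset.range (k + 1), (1 - z * t * t ^ i))) *
          ((∏ i ∈ Finset.range (k + 1), (1 - z * t * t ^ i)) * (1 - z)) =
        t ^ (k+1) * (∏ i ∈ Finset.Icc 1 k, (1 - t ^ i)) * (1 - z) by
      field_simp]
    ring

/-- The trace formula for the `t`-boson Fock representation: with `k^d`
interpreted as the diagonal operator `|m⟩ ↦ z^m |m⟩` (where `z = t^d` is a
parameter with `0 < z < 1`, and `0 < t < 1`), the trace
`Tr[φ^b (φ†)^c k^d] = Σ_{m≥0} z^m ⟨m| φ^b (φ†)^c |m⟩` equals `0` if `b ≠ c`,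
and equals `(∏_{i=1}^{b} (1 - t^i)) / (∏_{i=0}^{b} (1 - z t^i))` if `b = c`. -/
theorem fock_trace_formula (t z : ℝ) (ht : t ∈ Set.Ioo (0 : ℝ) 1)
    (hz : z ∈ Set.Ioo (0 : ℝ) 1) (b c : ℕ) :
    (∑' m : ℕ, z ^ m *
        ((phiOp t ^ b * phiDagOp ^ c) (Finsupp.single m (1 : ℝ) : ℕ →₀ ℝ)) m) =
      if b = c then
        (∏ i ∈ Finset.Icc 1 b, (1 - t ^ i)) /
          ∏ i ∈ Finset.range (b + 1), (1 - z * t ^ i)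
      else 0 := by
  obtain ⟨ht0, ht1⟩ := ht
  obtain ⟨hz0, hz1⟩ := hz
  have hterm : ∀ m : ℕ, ((phiOp t ^ b * phiDagOp ^ c) (Finsupp.single m (1:ℝ))) m =
      (∏ j ∈ Finset.range b, (1 - t ^ (m + c - j))) * (if m + c - b = m then 1 else 0) := by
    intro m
    rw [Module.End.mul_apply, phiDag_pow, phi_pow, Finsupp.smul_apply, Finsupp.single_apply]
    simp
  by_cases hbc : b = c
  · subst hbc
    rw [if_pos rfl]
    have hcongr : ∀ m : ℕ, z ^ m *
        ((phiOp t ^ b * phiDagOp ^ b) (Finsupp.single m (1:ℝ))) m =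
        z ^ m * ∏ i ∈ Finset.range b, (1 - t ^ (m + 1 + i)) := by
      intro m
      rw [hterm m, if_pos (by omega), mul_one]
      congr 1
      rw [← Finset.prod_range_reflect (fun i => 1 - t ^ (m + 1 + i)) b]
      exact Finset.prod_congr rfl fun j hj => by
        have hjb := Finset.mem_range.mp hj
        rw [show m + 1 + (b - 1 - j) = m + b - j from by omega]
    rw [tsum_congr hcongr, sum_main t ht0 ht1 b z hz0 hz1]
  · rw [if_neg hbc]
    have hcongr : ∀ m : ℕ, z ^ m *
        ((phiOp t ^ b * phiDagOp ^ c) (Finsupp.single m (1:ℝ))) m = 0 := by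
      intro m
      rw [hterm m]
      by_cases h : m + c - b = m
      · have hm0 : m = 0 := by omega
        have hcb : c < b := by omega
        rw [Finset.prod_eq_zero (Finset.mem_range.mpr hcb)
          (by rw [hm0]; simp)]
        simp
      · simp [h]
    rw [tsum_congr hcongr, tsum_zero]
end
end
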